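/- arXiv:2605.16970 — 5 statements merged into one kernel-verified Lean document; each statement's English description precedes it below -/
import Mathlib

section
/- For 0 < α < 2 and a random vector X in ℝ^p with E|X|^α < ∞, the integral over ℝ^p of (1 - E[cos⟨t,X⟩]) / |t|^(α+p) dt equals c(p,α) · E|X|^α, where c(p,α) = 2π^(p/2)Γ(1-α/2) / (α·2^α·Γ((α+p)/2)). -/
/-!
With `β = (α + p) / 2`, subordination writes `|t| ^ (-(α + p))` as
`Γ(β)⁻¹ ∫₀^∞ s ^ (β - 1) e ^ (-s |t|²) ds`. After Tonelli, the integral in `t` is Gaussian: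
`∫ (1 - cos ⟨t, x⟩) e ^ (-s |t|²) dt = (π / s) ^ (p / 2) (1 - e ^ (-|x|² / (4 s)))`, and what
remains is `∫₀^∞ s ^ (α/2 - 1) (1 - e ^ (-c / s)) ds = c ^ (α/2) Γ(1 - α/2) / (α/2)` with
`c = |x|² / 4`, which the substitution `s ↦ 1 / s` and an integration by parts reduce to the
Gamma integral. A second application of Tonelli, in `(t, ω)`, passes from a fixed vector to the
random vector `X`.
-/

open MeasureTheory ProbabilityTheory Real

/-- The constant c(p,α) from Székely–Rizzo–Bakirov. -/
noncomputable def cConst (p : ℕ) (α : ℝ) : ℝ :=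
  2 * Real.pi ^ ((p : ℝ) / 2) * Real.Gamma (1 - α / 2) /
    (α * 2 ^ α * Real.Gamma ((α + p) / 2))

open Set Filter Topology
open scoped RealInnerProductSpace

section OneDimensional

variable {r c : ℝ}

lemma one_sub_exp_neg_nonneg {u : ℝ} (hu : 0 ≤ u) : 0 ≤ 1 - exp (-u) := by
  simpa using exp_le_one_iff.2 (neg_nonpos.2 hu)

lemma integrableOn_rpow_mul_exp_neg_mul {s b : ℝ} (hs : -1 < s) (hb : 0 < b) :
    IntegrableOn (fun x : ℝ => x ^ s * exp (-(b * x))) (Ioi 0) := by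
  simpa only [rpow_one, neg_mul] using integrableOn_rpow_mul_exp_neg_mul_rpow hs one_pos hb

lemma lintegral_rpow_mul_exp_neg_mul {a β : ℝ} (ha : 0 < a) (hβ : 0 < β) {w : ℝ} (hw : 0 ≤ w) :
    ∫⁻ s in Ioi 0, ENNReal.ofReal ((Gamma β)⁻¹ * s ^ (β - 1) * (w * exp (-s * a))) =
      ENNReal.ofReal (w / a ^ β) := by
  have hrearrange : ∀ s : ℝ, (Gamma β)⁻¹ * s ^ (β - 1) * (w * exp (-s * a)) =
      (Gamma β)⁻¹ * w * (s ^ (β - 1) * exp (-(a * s))) := fun s => by ring_nf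
  simp_rw [hrearrange]
  rw [← ofReal_integral_eq_lintegral_ofReal
      ((integrableOn_rpow_mul_exp_neg_mul (by linarith) ha).const_mul _),
    integral_const_mul, integral_rpow_mul_exp_neg_mul_Ioi hβ ha, one_div, inv_rpow ha.le]
  · field_simp
  · filter_upwards [ae_restrict_mem measurableSet_Ioi] with s (hs : 0 < s)
    positivity

lemma integrableOn_rpow_mul_one_sub_exp_neg_mul (hr0 : 0 < r) (hr1 : r < 1) (hc : 0 < c) :
    IntegrableOn (fun u : ℝ => u ^ (-r - 1) * (1 - exp (-(c * u)))) (Ioi 0) := by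
  have hmeas : AEStronglyMeasurable (fun u : ℝ => u ^ (-r - 1) * (1 - exp (-(c * u)))) := by
    fun_prop
  have hnonneg : ∀ u : ℝ, 0 < u → 0 ≤ u ^ (-r - 1) * (1 - exp (-(c * u))) := fun u hu =>
    mul_nonneg (rpow_nonneg hu.le _) (one_sub_exp_neg_nonneg (by positivity))
  rw [← Ioc_union_Ioi_eq_Ioi zero_le_one]
  refine IntegrableOn.union ?_ ?_
  · have hint : IntegrableOn (fun u : ℝ => u ^ (-r)) (Ioc 0 1) := by
      rw [integrableOn_Ioc_iff_integrableOn_Ioo,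
        intervalIntegral.integrableOn_Ioo_rpow_iff one_pos]
      linarith
    refine (hint.const_mul c).mono' hmeas.restrict ?_
    filter_upwards [ae_restrict_mem measurableSet_Ioc] with u hu
    have hu : 0 < u := hu.1
    rw [norm_of_nonneg (hnonneg u hu)]
    calc u ^ (-r - 1) * (1 - exp (-(c * u))) ≤ u ^ (-r - 1) * (c * u) := by
          gcongr; linarith [one_sub_le_exp_neg (c * u)]
      _ = c * u ^ (-r) := by rw [rpow_sub_one hu.ne']; field_simp
  · have hint : IntegrableOn (fun u : ℝ => u ^ (-r - 1)) (Ioi 1) :=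
      integrableOn_Ioi_rpow_of_lt (by linarith) one_pos
    refine hint.mono' hmeas.restrict ?_
    filter_upwards [ae_restrict_mem measurableSet_Ioi] with u (hu : 1 < u)
    rw [norm_of_nonneg (hnonneg u (by linarith))]
    exact mul_le_of_le_one_right (rpow_nonneg (by linarith) _)
      (by linarith [exp_pos (-(c * u))])

lemma integral_rpow_mul_one_sub_exp_neg_mul (hr0 : 0 < r) (hr1 : r < 1) (hc : 0 < c) :
    ∫ u in Ioi 0, u ^ (-r - 1) * (1 - exp (-(c * u))) = c ^ r * Gamma (1 - r) / r := by
  have hΓ : ∫ u in Ioi 0, u ^ (-r) * (c * exp (-(c * u))) = c ^ r * Gamma (1 - r) := by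
    have h := integral_rpow_mul_exp_neg_mul_Ioi (sub_pos.2 hr1) hc
    rw [sub_sub_cancel_left] at h
    simp_rw [mul_left_comm _ c, integral_const_mul, h, one_div, inv_rpow hc.le, ← rpow_neg hc.le,
      neg_sub, rpow_sub_one hc.ne']
    field_simp
  have hnonneg : ∀ u : ℝ, 0 < u → 0 ≤ u ^ (-r) * (1 - exp (-(c * u))) := fun u hu =>
    mul_nonneg (rpow_nonneg hu.le _) (one_sub_exp_neg_nonneg (by positivity))
  have hbound_zero : ∀ u : ℝ, 0 < u → u ^ (-r) * (1 - exp (-(c * u))) ≤ c * u ^ (1 - r) := by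
    intro u hu
    calc u ^ (-r) * (1 - exp (-(c * u))) ≤ u ^ (-r) * (c * u) := by
          gcongr; linarith [one_sub_le_exp_neg (c * u)]
      _ = c * u ^ (1 - r) := by rw [sub_eq_neg_add, rpow_add_one hu.ne']; ring
  have hbound_top : ∀ u : ℝ, 0 < u → u ^ (-r) * (1 - exp (-(c * u))) ≤ u ^ (-r) := fun u hu =>
    mul_le_of_le_one_right (rpow_nonneg hu.le _) (by linarith [exp_pos (-(c * u))])
  have hlim_zero : Tendsto (fun u : ℝ => c * u ^ (1 - r)) (𝓝[>] 0) (𝓝 0) := by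
    have h := ((continuousAt_rpow_const 0 (1 - r) (Or.inr (by linarith))).const_mul c).tendsto
    rw [zero_rpow (by linarith), mul_zero] at h
    exact h.mono_left nhdsWithin_le_nhds
  have hparts := integral_Ioi_mul_deriv_eq_deriv_mul (a := 0) (a' := 0) (b' := 0)
    (u := fun u : ℝ => u ^ (-r)) (u' := fun u => -r * u ^ (-r - 1))
    (v := fun u : ℝ => 1 - exp (-(c * u))) (v' := fun u => c * exp (-(c * u)))
    (fun u hu => hasDerivAt_rpow_const (Or.inl (ne_of_gt hu)))
    (fun u _ => by
      simpa [mul_comm] using (((hasDerivAt_id u).const_mul c).neg.exp).const_sub 1)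
    (by simpa only [IntegrableOn, Pi.mul_def, mul_left_comm _ c] using
      (integrableOn_rpow_mul_exp_neg_mul (neg_lt_neg hr1) hc).const_mul c)
    (by simpa only [IntegrableOn, Pi.mul_def, mul_assoc] using
      (integrableOn_rpow_mul_one_sub_exp_neg_mul hr0 hr1 hc).const_mul (-r))
    (squeeze_zero' (eventually_mem_nhdsWithin.mono hnonneg)
      (eventually_mem_nhdsWithin.mono hbound_zero) hlim_zero)
    (squeeze_zero' (eventually_gt_atTop 0 |>.mono hnonneg)
      (eventually_gt_atTop 0 |>.mono hbound_top) (tendsto_rpow_neg_atTop hr0))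
  simp only [hΓ, sub_zero, zero_sub, mul_assoc, integral_const_mul] at hparts
  field_simp
  linarith

lemma rpow_mul_one_sub_exp_neg_div_comp_inv {x : ℝ} (hx : 0 < x) :
    x ^ (-1 - 1 : ℝ) * ((x ^ (-1 : ℝ)) ^ (r - 1) * (1 - exp (-(c / x ^ (-1 : ℝ))))) =
      x ^ (-r - 1) * (1 - exp (-(c * x))) := by
  rw [rpow_neg_one, div_inv_eq_mul, ← mul_assoc, inv_rpow hx.le, ← rpow_neg hx.le,
    ← rpow_add hx]
  ring_nf

lemma integrableOn_rpow_mul_one_sub_exp_neg_div (hr0 : 0 < r) (hr1 : r < 1) (hc : 0 < c) :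
    IntegrableOn (fun s : ℝ => s ^ (r - 1) * (1 - exp (-(c / s)))) (Ioi 0) := by
  rw [← integrableOn_Ioi_comp_rpow_iff' _ (neg_ne_zero.2 one_ne_zero)]
  refine (integrableOn_rpow_mul_one_sub_exp_neg_mul hr0 hr1 hc).congr_fun (fun x hx => ?_)
    measurableSet_Ioi
  exact (rpow_mul_one_sub_exp_neg_div_comp_inv hx).symm

lemma integral_rpow_mul_one_sub_exp_neg_div (hr0 : 0 < r) (hr1 : r < 1) (hc : 0 < c) :
    ∫ s in Ioi 0, s ^ (r - 1) * (1 - exp (-(c / s))) = c ^ r * Gamma (1 - r) / r := by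
  rw [← integral_comp_rpow_Ioi _ (neg_ne_zero.2 one_ne_zero),
    ← integral_rpow_mul_one_sub_exp_neg_mul hr0 hr1 hc]
  refine setIntegral_congr_fun measurableSet_Ioi fun x hx => ?_
  rw [abs_neg, abs_one, one_mul, smul_eq_mul]
  exact rpow_mul_one_sub_exp_neg_div_comp_inv hx

lemma lintegral_rpow_mul_one_sub_exp_neg_div (hr0 : 0 < r) (hr1 : r < 1) (hc : 0 < c)
    {w : ℝ} (hw : 0 ≤ w) :
    ∫⁻ s in Ioi 0, ENNReal.ofReal (w * (s ^ (r - 1) * (1 - exp (-(c / s))))) =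
      ENNReal.ofReal (w * (c ^ r * Gamma (1 - r) / r)) := by
  rw [← ofReal_integral_eq_lintegral_ofReal
      ((integrableOn_rpow_mul_one_sub_exp_neg_div hr0 hr1 hc).const_mul _),
    integral_const_mul, integral_rpow_mul_one_sub_exp_neg_div hr0 hr1 hc]
  filter_upwards [ae_restrict_mem measurableSet_Ioi] with s (hs : 0 < s)
  have := one_sub_exp_neg_nonneg (div_pos hc hs).le
  positivity

end OneDimensional

section InnerProductSpace

variable {V : Type*} [NormedAddCommGroup V] [InnerProductSpace ℝ V]

lemma re_cexp_neg_mul_sq_norm_add_I_mul_inner (s : ℝ) (x t : V) :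
    (Complex.exp (-s * ‖t‖ ^ 2 + Complex.I * ⟪x, t⟫)).re = cos ⟪t, x⟫ * exp (-s * ‖t‖ ^ 2) := by
  have h : -(s : ℂ) * ‖t‖ ^ 2 + Complex.I * ⟪x, t⟫ =
      (-s * ‖t‖ ^ 2 : ℝ) + (⟪x, t⟫ : ℝ) * Complex.I := by
    push_cast; ring
  rw [h, Complex.exp_add, ← Complex.ofReal_exp, Complex.re_ofReal_mul,
    Complex.exp_ofReal_mul_I_re, real_inner_comm, mul_comm]

lemma ofReal_one_sub_cos_inner_div_norm_rpow_eq_lintegral (x t : V) {β : ℝ} (hβ : 0 < β) :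
    ENNReal.ofReal ((1 - cos ⟪t, x⟫) / ‖t‖ ^ (2 * β)) =
      ∫⁻ s in Ioi 0,
        ENNReal.ofReal ((Gamma β)⁻¹ * s ^ (β - 1) * ((1 - cos ⟪t, x⟫) * exp (-s * ‖t‖ ^ 2))) := by
  rcases eq_or_ne t 0 with rfl | ht
  · simp
  rw [rpow_mul (norm_nonneg t), rpow_two]
  exact (lintegral_rpow_mul_exp_neg_mul (by positivity) hβ (sub_nonneg.2 (cos_le_one _))).symm

variable [FiniteDimensional ℝ V] [MeasurableSpace V] [BorelSpace V]

lemma integrable_cos_inner_mul_exp_neg_mul_sq_norm (x : V) {s : ℝ} (hs : 0 < s) :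
    Integrable fun t : V => cos ⟪t, x⟫ * exp (-s * ‖t‖ ^ 2) := by
  simpa only [RCLike.re_to_complex, re_cexp_neg_mul_sq_norm_add_I_mul_inner] using
    (GaussianFourier.integrable_cexp_neg_mul_sq_norm_add (b := s) (by simpa) Complex.I x).re

lemma integral_cos_inner_mul_exp_neg_mul_sq_norm (x : V) {s : ℝ} (hs : 0 < s) :
    ∫ t : V, cos ⟪t, x⟫ * exp (-s * ‖t‖ ^ 2) =
      (π / s) ^ (Module.finrank ℝ V / 2 : ℝ) * exp (-(‖x‖ ^ 2 / (4 * s))) := by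
  have hb : 0 < (s : ℂ).re := by simpa
  have h := integral_re (GaussianFourier.integrable_cexp_neg_mul_sq_norm_add hb Complex.I x)
  rw [GaussianFourier.integral_cexp_neg_mul_sq_norm_add hb] at h
  simp only [RCLike.re_to_complex, re_cexp_neg_mul_sq_norm_add_I_mul_inner] at h
  rw [h, ← Complex.ofReal_re
    ((π / s) ^ (Module.finrank ℝ V / 2 : ℝ) * exp (-(‖x‖ ^ 2 / (4 * s))))]
  congr 1
  push_cast [Complex.ofReal_cpow (by positivity : 0 ≤ π / s), Complex.I_sq]
  ring_nf

lemma integrable_exp_neg_mul_sq_norm {s : ℝ} (hs : 0 < s) :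
    Integrable fun t : V => exp (-s * ‖t‖ ^ 2) := by
  simpa using integrable_cos_inner_mul_exp_neg_mul_sq_norm (0 : V) hs

lemma integrable_one_sub_cos_inner_mul_exp_neg_mul_sq_norm (x : V) {s : ℝ} (hs : 0 < s) :
    Integrable fun t : V => (1 - cos ⟪t, x⟫) * exp (-s * ‖t‖ ^ 2) := by
  simp_rw [sub_mul, one_mul]
  exact (integrable_exp_neg_mul_sq_norm hs).sub (integrable_cos_inner_mul_exp_neg_mul_sq_norm x hs)

lemma integral_one_sub_cos_inner_mul_exp_neg_mul_sq_norm (x : V) {s : ℝ} (hs : 0 < s) :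
    ∫ t : V, (1 - cos ⟪t, x⟫) * exp (-s * ‖t‖ ^ 2) =
      (π / s) ^ (Module.finrank ℝ V / 2 : ℝ) * (1 - exp (-(‖x‖ ^ 2 / (4 * s)))) := by
  simp_rw [sub_mul, one_mul]
  rw [integral_sub (integrable_exp_neg_mul_sq_norm hs)
      (integrable_cos_inner_mul_exp_neg_mul_sq_norm x hs),
    GaussianFourier.integral_rexp_neg_mul_sq_norm hs,
    integral_cos_inner_mul_exp_neg_mul_sq_norm x hs]
  ring

lemma lintegral_inv_Gamma_mul_rpow_mul_one_sub_cos_inner_mul_exp (x : V) {β s : ℝ}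
    (hβ : 0 ≤ β) (hs : 0 < s) :
    ∫⁻ t : V,
        ENNReal.ofReal ((Gamma β)⁻¹ * s ^ (β - 1) * ((1 - cos ⟪t, x⟫) * exp (-s * ‖t‖ ^ 2))) =
      ENNReal.ofReal ((Gamma β)⁻¹ * π ^ (Module.finrank ℝ V / 2 : ℝ) *
        (s ^ (β - Module.finrank ℝ V / 2 - 1) * (1 - exp (-(‖x‖ ^ 2 / 4 / s))))) := by
  have hexp : s ^ (β - 1) / s ^ (Module.finrank ℝ V / 2 : ℝ) =
      s ^ (β - Module.finrank ℝ V / 2 - 1) := by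
    rw [← rpow_sub hs]; ring_nf
  rw [← ofReal_integral_eq_lintegral_ofReal
      ((integrable_one_sub_cos_inner_mul_exp_neg_mul_sq_norm x hs).const_mul _),
    integral_const_mul, integral_one_sub_cos_inner_mul_exp_neg_mul_sq_norm x hs,
    div_rpow pi_pos.le hs.le, ← hexp, div_div]
  · congr 1; ring
  · exact ae_of_all _ fun t =>
      mul_nonneg (by positivity) (mul_nonneg (sub_nonneg.2 (cos_le_one _)) (exp_pos _).le)

end InnerProductSpace

lemma cConst_mul_rpow_eq (d : ℕ) {α y : ℝ} (hα : 0 < α) (hy : 0 ≤ y) :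
    cConst d α * y ^ α = (Gamma ((α + d) / 2))⁻¹ * π ^ ((d : ℝ) / 2) *
      ((y ^ 2 / 4) ^ (α / 2) * Gamma (1 - α / 2) / (α / 2)) := by
  have hpow : (y ^ 2 / 4) ^ (α / 2) = y ^ α / 2 ^ α := by
    rw [show y ^ 2 / 4 = (y / 2) ^ 2 by ring, ← rpow_two, ← rpow_mul (by positivity),
      div_rpow hy zero_le_two]
    ring_nf
  rw [hpow, cConst]
  field_simp

lemma cConst_nonneg (p : ℕ) {α : ℝ} (hα : 0 ≤ α) (hα2 : α ≤ 2) : 0 ≤ cConst p α := by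
  have := Gamma_nonneg_of_nonneg (s := 1 - α / 2) (by linarith)
  have := Gamma_nonneg_of_nonneg (s := (α + p) / 2) (by positivity)
  unfold cConst
  positivity

theorem lintegral_one_sub_cos_inner_div_norm_rpow {V : Type*} [NormedAddCommGroup V]
    [InnerProductSpace ℝ V] [FiniteDimensional ℝ V] [MeasurableSpace V] [BorelSpace V]
    {α : ℝ} (hα : 0 < α) (hα2 : α < 2) (x : V) :
    ∫⁻ t : V, ENNReal.ofReal ((1 - cos ⟪t, x⟫) / ‖t‖ ^ (α + Module.finrank ℝ V)) =
      ENNReal.ofReal (cConst (Module.finrank ℝ V) α * ‖x‖ ^ α) := by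
  rcases eq_or_ne x 0 with rfl | hx
  · simp [zero_rpow hα.ne']
  set d := Module.finrank ℝ V
  set β : ℝ := (α + d) / 2 with hβ
  let K : V → ℝ → ℝ := fun t s =>
    (Gamma β)⁻¹ * s ^ (β - 1) * ((1 - cos ⟪t, x⟫) * exp (-s * ‖t‖ ^ 2))
  have hK : Measurable (Function.uncurry fun t s => ENNReal.ofReal (K t s)) := by fun_prop
  calc ∫⁻ t, ENNReal.ofReal ((1 - cos ⟪t, x⟫) / ‖t‖ ^ (α + d))
      = ∫⁻ t, ∫⁻ s in Ioi 0, ENNReal.ofReal (K t s) := lintegral_congr fun t => by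
        rw [show α + d = 2 * β by ring]
        exact ofReal_one_sub_cos_inner_div_norm_rpow_eq_lintegral x t (by positivity)
    _ = ∫⁻ s in Ioi 0, ∫⁻ t, ENNReal.ofReal (K t s) := lintegral_lintegral_swap hK.aemeasurable
    _ = ∫⁻ s in Ioi 0, ENNReal.ofReal ((Gamma β)⁻¹ * π ^ ((d : ℝ) / 2) *
          (s ^ (α / 2 - 1) * (1 - exp (-(‖x‖ ^ 2 / 4 / s))))) := by
        refine setLIntegral_congr_fun measurableSet_Ioi fun s hs => ?_
        rw [lintegral_inv_Gamma_mul_rpow_mul_one_sub_cos_inner_mul_exp x (by positivity) hs,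
          show β - d / 2 = α / 2 by ring]
    _ = ENNReal.ofReal (cConst d α * ‖x‖ ^ α) := by
        rw [lintegral_rpow_mul_one_sub_exp_neg_div (by positivity) (by linarith) (by positivity)
          (by positivity), cConst_mul_rpow_eq d hα (norm_nonneg x)]

theorem integral_integral_eq_of_lintegral_eq_ofReal {α β : Type*} [MeasurableSpace α]
    [MeasurableSpace β] {μ : Measure α} {ν : Measure β} [SFinite μ] [SFinite ν]
    {f : α → β → ℝ} {g : β → ℝ} (hf : Measurable (Function.uncurry f))
    (hf0 : ∀ x y, 0 ≤ f x y) (hfi : ∀ x, Integrable (f x) ν)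
    (hfg : ∀ y, ∫⁻ x, ENNReal.ofReal (f x y) ∂μ = ENNReal.ofReal (g y))
    (hg : Integrable g ν) (hg0 : ∀ y, 0 ≤ g y) :
    ∫ x, ∫ y, f x y ∂ν ∂μ = ∫ y, g y ∂ν := by
  have hinner : ∀ x, ENNReal.ofReal (∫ y, f x y ∂ν) = ∫⁻ y, ENNReal.ofReal (f x y) ∂ν :=
    fun x => ofReal_integral_eq_lintegral_ofReal (hfi x) (ae_of_all _ (hf0 x))
  rw [integral_eq_lintegral_of_nonneg_ae (ae_of_all _ fun x => integral_nonneg (hf0 x))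
      hf.stronglyMeasurable.integral_prod_right.aestronglyMeasurable,
    lintegral_congr hinner, lintegral_lintegral_swap hf.ennreal_ofReal.aemeasurable,
    lintegral_congr hfg, ← ofReal_integral_eq_lintegral_ofReal hg (ae_of_all _ hg0),
    ENNReal.toReal_ofReal (integral_nonneg hg0)]

theorem stmt0 {Ω : Type*} [MeasureSpace Ω] [IsProbabilityMeasure (ℙ : Measure Ω)]
    {p : ℕ} (X : Ω → EuclideanSpace ℝ (Fin p)) (hX : Measurable X)
    {α : ℝ} (hα : 0 < α) (hα2 : α < 2)
    (hmom : Integrable (fun ω => ‖X ω‖ ^ α) (ℙ : Measure Ω)) :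
    ∫ t : EuclideanSpace ℝ (Fin p),
        (1 - ∫ ω, Real.cos ((inner ℝ t (X ω) : ℝ))) / ‖t‖ ^ (α + (p : ℝ)) =
      cConst p α * ∫ ω, ‖X ω‖ ^ α := by
  have hcos : ∀ t : EuclideanSpace ℝ (Fin p), Integrable (fun ω => cos ⟪t, X ω⟫) ℙ := fun t =>
    (integrable_const 1).mono' (by fun_prop) (ae_of_all _ fun ω => abs_cos_le_one _)
  calc ∫ t : EuclideanSpace ℝ (Fin p), (1 - ∫ ω, cos ⟪t, X ω⟫) / ‖t‖ ^ (α + (p : ℝ))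
      = ∫ t : EuclideanSpace ℝ (Fin p), ∫ ω, (1 - cos ⟪t, X ω⟫) / ‖t‖ ^ (α + (p : ℝ)) := by
        congr with t
        rw [integral_div, integral_sub (integrable_const 1) (hcos t), integral_const,
          probReal_univ, one_smul]
    _ = ∫ ω, cConst p α * ‖X ω‖ ^ α :=
        integral_integral_eq_of_lintegral_eq_ofReal (by fun_prop)
          (fun t ω => div_nonneg (sub_nonneg.2 (cos_le_one _)) (by positivity))
          (fun t => ((integrable_const 1).sub (hcos t)).div_const _)
          (fun ω => by
            simpa [finrank_euclideanSpace_fin] using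
              lintegral_one_sub_cos_inner_div_norm_rpow hα hα2 (X ω))
          (hmom.const_mul _) (fun ω => mul_nonneg (cConst_nonneg p hα.le hα2.le) (by positivity))
    _ = cConst p α * ∫ ω, ‖X ω‖ ^ α := integral_const_mul _ _
end

section
/- siCov^(α)(X,Y) = 0 if and only if X and Y are sub-independent, i.e., φ_{X,Y}(t,t) = φ_X(t)φ_Y(t) for all t ∈ ℝ^p (equivalently, the distribution of X+Y is the convolution of the distributions of X and Y). -/
open MeasureTheory ProbabilityTheory Real

/-- The weight function ρ_α(t) = c(p,α)⁻¹ |t|^{-α-p}. -/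
noncomputable def rhoWeight (p : ℕ) (α : ℝ) (t : EuclideanSpace ℝ (Fin p)) : ℝ :=
  (cConst p α)⁻¹ * ‖t‖ ^ (-α - (p : ℝ))

/-!
Write `D(t) = φ_{X+Y}(t) - φ_X(t) φ_Y(t)`. A non-integrable function has Bochner integral `0`, so
the content of the forward direction is that `|D|² ρ_α` is integrable. For `β = min 1 α` we have
`α < 2β`, and `|e^{is} - 1| ≤ 2 |s|^β` gives `|D(t)| ≤ C |t|^β`; together with `|D| ≤ 2` the
integrand is `O(|t|^{2β-α-p})` near `0` and `O(|t|^{-α-p})` near `∞`, both integrable. A vanishing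
integral of a nonnegative integrable function forces `D = 0` almost everywhere, hence everywhere,
`D` being continuous.
-/

open Metric Complex BoundedContinuousFunction
open scoped RealInnerProductSpace

section DecayIntegrability

variable {E F : Type*} [NormedAddCommGroup E] [NormedSpace ℝ E] [FiniteDimensional ℝ E]
  [MeasurableSpace E] [BorelSpace E] [NormedAddCommGroup F] {μ : Measure E} [μ.IsAddHaarMeasure]

lemma integrableOn_compl_ball_of_norm_le_rpow {f : E → F} {C r : ℝ}
    (hr : Module.finrank ℝ E < r) (h_decay : ∀ x ∈ (ball (0 : E) 1)ᶜ, ‖f x‖ ≤ C * ‖x‖ ^ (-r))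
    (h_meas : AEStronglyMeasurable f μ) :
    IntegrableOn f (ball 0 1)ᶜ μ := by
  refine Integrable.mono' ((integrable_one_add_norm hr).const_mul (C * 2 ^ r)).integrableOn
    h_meas.restrict ?_
  rw [ae_restrict_iff' measurableSet_ball.compl]
  refine ae_of_all _ fun x hx => (h_decay x hx).trans ?_
  have hx1 : 1 ≤ ‖x‖ := by simpa using hx
  have hC : 0 ≤ C := nonneg_of_mul_nonneg_left ((norm_nonneg _).trans (h_decay x hx))
    (by positivity)
  have key : ‖x‖ ^ (-r) ≤ ((1 + ‖x‖) / 2) ^ (-r) :=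
    Real.rpow_le_rpow_of_nonpos (by positivity) (by linarith)
      (by linarith [(Nat.cast_nonneg _ : (0 : ℝ) ≤ Module.finrank ℝ E)])
  rw [Real.div_rpow (by positivity) zero_le_two, Real.rpow_neg zero_le_two, div_inv_eq_mul] at key
  calc C * ‖x‖ ^ (-r) ≤ C * ((1 + ‖x‖) ^ (-r) * 2 ^ r) := by gcongr
    _ = C * 2 ^ r * (1 + ‖x‖) ^ (-r) := by ring

end DecayIntegrability

lemma norm_sub_mul_le_of_norm_le_one {R : Type*} [SeminormedRing R] {a b c : R}
    (hb : ‖b‖ ≤ 1) : ‖a - b * c‖ ≤ ‖a - 1‖ + ‖b - 1‖ + ‖c - 1‖ := by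
  calc ‖a - b * c‖ = ‖(a - 1) - (b - 1) - b * (c - 1)‖ := by congr 1; noncomm_ring
    _ ≤ ‖a - 1‖ + ‖b - 1‖ + ‖b‖ * ‖c - 1‖ := by
        grw [norm_sub_le, norm_sub_le, norm_mul_le]
    _ ≤ ‖a - 1‖ + ‖b - 1‖ + ‖c - 1‖ := by
        grw [hb, one_mul]

lemma norm_exp_ofReal_mul_I_sub_one_le_rpow (x : ℝ) {β : ℝ} (hβ0 : 0 ≤ β) (hβ1 : β ≤ 1) :
    ‖exp (x * I) - 1‖ ≤ 2 * |x| ^ β := by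
  rcases le_total |x| 1 with hx | hx
  · calc ‖exp (x * I) - 1‖ ≤ ‖x‖ := by rw [mul_comm]; exact norm_exp_I_mul_ofReal_sub_one_le
      _ ≤ |x| ^ β := Real.self_le_rpow_of_le_one (abs_nonneg x) hx hβ1
      _ ≤ 2 * |x| ^ β := by linarith [Real.rpow_nonneg (abs_nonneg x) β]
  · calc ‖exp (x * I) - 1‖ ≤ ‖exp (x * I)‖ + ‖(1 : ℂ)‖ := norm_sub_le _ _
      _ = 2 := by rw [norm_exp_ofReal_mul_I, norm_one]; norm_num
      _ ≤ 2 * |x| ^ β := by linarith [Real.one_le_rpow hx hβ0]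

section CharFun

variable {E : Type*} [NormedAddCommGroup E] [InnerProductSpace ℝ E]
  [MeasurableSpace E] [BorelSpace E]

lemma norm_charFun_sub_one_le {μ : Measure E} [IsProbabilityMeasure μ] {β : ℝ} (hβ0 : 0 ≤ β)
    (hβ1 : β ≤ 1) (hμ : Integrable (fun x => ‖x‖ ^ β) μ) (t : E) :
    ‖charFun μ t - 1‖ ≤ 2 * (∫ x, ‖x‖ ^ β ∂μ) * ‖t‖ ^ β := by
  have hchar : charFun μ t - 1 = ∫ x, (innerProbChar t x - 1) ∂μ := by
    rw [integral_sub ((innerProbChar t).integrable μ) (integrable_const 1),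
      charFun_eq_integral_innerProbChar]
    simp
  have hpoint (x : E) : ‖innerProbChar t x - 1‖ ≤ 2 * ‖t‖ ^ β * ‖x‖ ^ β := by
    calc ‖innerProbChar t x - 1‖ ≤ 2 * |⟪x, t⟫| ^ β :=
          norm_exp_ofReal_mul_I_sub_one_le_rpow _ hβ0 hβ1
      _ ≤ 2 * (‖x‖ * ‖t‖) ^ β := by gcongr; exact abs_real_inner_le_norm x t
      _ = 2 * ‖t‖ ^ β * ‖x‖ ^ β := by
          rw [Real.mul_rpow (norm_nonneg x) (norm_nonneg t)]; ring
  calc ‖charFun μ t - 1‖ ≤ ∫ x, ‖innerProbChar t x - 1‖ ∂μ :=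
        hchar ▸ norm_integral_le_integral_norm _
    _ ≤ ∫ x, 2 * ‖t‖ ^ β * ‖x‖ ^ β ∂μ :=
        integral_mono_of_nonneg (ae_of_all _ fun _ => norm_nonneg _) (hμ.const_mul _)
          (ae_of_all _ hpoint)
    _ = 2 * (∫ x, ‖x‖ ^ β ∂μ) * ‖t‖ ^ β := by rw [integral_const_mul]; ring

end CharFun

lemma integrable_norm_add_rpow {Ω E : Type*} [MeasurableSpace Ω] {P : Measure Ω}
    [NormedAddCommGroup E] [MeasurableSpace E] [BorelSpace E] [SecondCountableTopology E]
    {X Y : Ω → E} (hX : AEMeasurable X P) (hY : AEMeasurable Y P)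
    {β : ℝ} (hβ0 : 0 ≤ β) (hβ1 : β ≤ 1) (hXβ : Integrable (fun ω => ‖X ω‖ ^ β) P)
    (hYβ : Integrable (fun ω => ‖Y ω‖ ^ β) P) :
    Integrable (fun ω => ‖(X + Y) ω‖ ^ β) P := by
  refine (hXβ.add hYβ).mono' ((hX.add hY).norm.pow_const β).aestronglyMeasurable
    (ae_of_all _ fun ω => ?_)
  rw [Real.norm_of_nonneg (by positivity)]
  calc ‖X ω + Y ω‖ ^ β ≤ (‖X ω‖ + ‖Y ω‖) ^ β := by gcongr; exact norm_add_le _ _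
    _ ≤ ‖X ω‖ ^ β + ‖Y ω‖ ^ β :=
        Real.rpow_add_le_add_rpow (norm_nonneg _) (norm_nonneg _) hβ0 hβ1

section SubIndependence

variable {Ω E : Type*} [MeasurableSpace Ω] {P : Measure Ω} [NormedAddCommGroup E]
  [InnerProductSpace ℝ E] [SecondCountableTopology E] [MeasurableSpace E] [BorelSpace E]

noncomputable def subIndepDefect (P : Measure Ω) (X Y : Ω → E) (t : E) : ℂ :=
  charFun (P.map (X + Y)) t - charFun (P.map X) t * charFun (P.map Y) t

lemma integral_exp_I_mul_inner_eq_charFun_map {Z : Ω → E} (hZ : AEMeasurable Z P) (t : E) :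
    ∫ ω, exp (I * ⟪t, Z ω⟫) ∂P = charFun (P.map Z) t := by
  rw [charFun_apply, integral_map hZ (by fun_prop)]
  simp only [real_inner_comm, mul_comm]

lemma continuous_subIndepDefect [IsFiniteMeasure P]
    {X Y : Ω → E} : Continuous (subIndepDefect P X Y) := by
  unfold subIndepDefect
  fun_prop

lemma norm_subIndepDefect_le_two [IsProbabilityMeasure P] {X Y : Ω → E} (hX : AEMeasurable X P)
    (hY : AEMeasurable Y P) (t : E) : ‖subIndepDefect P X Y t‖ ≤ 2 := by
  have := Measure.isProbabilityMeasure_map hX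
  have := Measure.isProbabilityMeasure_map hY
  have := Measure.isProbabilityMeasure_map (hX.add hY)
  calc ‖subIndepDefect P X Y t‖
      ≤ ‖charFun (P.map (X + Y)) t‖ + ‖charFun (P.map X) t‖ * ‖charFun (P.map Y) t‖ := by
        grw [subIndepDefect, norm_sub_le, norm_mul_le]
    _ ≤ 1 + 1 * 1 := by gcongr <;> exact norm_charFun_le_one t
    _ = 2 := by norm_num

lemma exists_norm_subIndepDefect_le_rpow [IsProbabilityMeasure P] {X Y : Ω → E}
    (hX : AEMeasurable X P) (hY : AEMeasurable Y P) {β : ℝ} (hβ0 : 0 ≤ β) (hβ1 : β ≤ 1)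
    (hXβ : Integrable (fun ω => ‖X ω‖ ^ β) P) (hYβ : Integrable (fun ω => ‖Y ω‖ ^ β) P) :
    ∃ C, ∀ t, ‖subIndepDefect P X Y t‖ ≤ C * ‖t‖ ^ β := by
  have := Measure.isProbabilityMeasure_map hX
  have hφ {Z : Ω → E} (hZ : AEMeasurable Z P) (hZβ : Integrable (fun ω => ‖Z ω‖ ^ β) P) (t : E) :
      ‖charFun (P.map Z) t - 1‖ ≤ 2 * (∫ x, ‖x‖ ^ β ∂P.map Z) * ‖t‖ ^ β :=
    have := Measure.isProbabilityMeasure_map hZ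
    norm_charFun_sub_one_le hβ0 hβ1
      ((integrable_map_measure (measurable_norm.pow_const β).aestronglyMeasurable hZ).mpr hZβ) t
  refine ⟨2 * ((∫ x, ‖x‖ ^ β ∂P.map (X + Y)) + (∫ x, ‖x‖ ^ β ∂P.map X) +
    ∫ x, ‖x‖ ^ β ∂P.map Y), fun t => ?_⟩
  calc ‖subIndepDefect P X Y t‖
      ≤ ‖charFun (P.map (X + Y)) t - 1‖ + ‖charFun (P.map X) t - 1‖ +
          ‖charFun (P.map Y) t - 1‖ :=
        norm_sub_mul_le_of_norm_le_one (norm_charFun_le_one t)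
    _ ≤ 2 * (∫ x, ‖x‖ ^ β ∂P.map (X + Y)) * ‖t‖ ^ β + 2 * (∫ x, ‖x‖ ^ β ∂P.map X) * ‖t‖ ^ β +
          2 * (∫ x, ‖x‖ ^ β ∂P.map Y) * ‖t‖ ^ β := by
        gcongr
        · exact hφ (hX.add hY) (integrable_norm_add_rpow hX hY hβ0 hβ1 hXβ hYβ) t
        · exact hφ hX hXβ t
        · exact hφ hY hYβ t
    _ = _ := by ring

end SubIndependence

section Weight

variable {p : ℕ} {α : ℝ}

lemma cConst_pos (hα : 0 < α) (hα2 : α < 2) : 0 < cConst p α := by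
  have := Real.Gamma_pos_of_pos (show 0 < 1 - α / 2 by linarith)
  have := Real.Gamma_pos_of_pos (show 0 < (α + p) / 2 by positivity)
  unfold cConst
  positivity

lemma rhoWeight_nonneg (hα : 0 < α) (hα2 : α < 2) (t : EuclideanSpace ℝ (Fin p)) :
    0 ≤ rhoWeight p α t := by
  have := cConst_pos (p := p) hα hα2
  unfold rhoWeight
  positivity

lemma rhoWeight_pos (hα : 0 < α) (hα2 : α < 2) {t : EuclideanSpace ℝ (Fin p)} (ht : t ≠ 0) :
    0 < rhoWeight p α t := by
  have := cConst_pos (p := p) hα hα2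
  have := norm_pos_iff.mpr ht
  unfold rhoWeight
  positivity

lemma rhoWeight_zero (hα : 0 < α) : rhoWeight p α 0 = 0 := by
  rw [rhoWeight, norm_zero, Real.zero_rpow (by linarith [(Nat.cast_nonneg p : (0 : ℝ) ≤ p)]),
    mul_zero]

lemma norm_sq_mul_rhoWeight_le (hα : 0 < α) (hα2 : α < 2) {z : ℂ} {C β : ℝ}
    {t : EuclideanSpace ℝ (Fin p)} (hz : ‖z‖ ≤ C * ‖t‖ ^ β) :
    ‖z‖ ^ 2 * rhoWeight p α t ≤ C ^ 2 * (cConst p α)⁻¹ * ‖t‖ ^ (-(α + p - 2 * β)) := by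
  have := cConst_pos (p := p) hα hα2
  rcases eq_or_ne t 0 with rfl | ht
  · rw [rhoWeight_zero hα, mul_zero]
    positivity
  have hsq : ‖z‖ ^ 2 ≤ C ^ 2 * ‖t‖ ^ (2 * β) := by
    calc ‖z‖ ^ 2 ≤ (C * ‖t‖ ^ β) ^ 2 := pow_le_pow_left₀ (norm_nonneg z) hz 2
      _ = C ^ 2 * ‖t‖ ^ (2 * β) := by
          rw [mul_pow, mul_comm 2 β, Real.rpow_mul (norm_nonneg t), Real.rpow_two]
  calc ‖z‖ ^ 2 * rhoWeight p α t ≤ C ^ 2 * ‖t‖ ^ (2 * β) * rhoWeight p α t :=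
        mul_le_mul_of_nonneg_right hsq (rhoWeight_nonneg hα hα2 t)
    _ = C ^ 2 * (cConst p α)⁻¹ * ‖t‖ ^ (-(α + p - 2 * β)) := by
        rw [rhoWeight, show -(α + p - 2 * β) = 2 * β + (-α - p) by ring,
          Real.rpow_add (norm_pos_iff.mpr ht)]
        ring

lemma integrable_norm_sq_mul_rhoWeight (hp : p ≠ 0) (hα : 0 < α) (hα2 : α < 2)
    {F : EuclideanSpace ℝ (Fin p) → ℂ} (hF : AEStronglyMeasurable F) {β C₀ C₁ : ℝ}
    (hαβ : α < 2 * β) (hbdd : ∀ t, ‖F t‖ ≤ C₀) (hHolder : ∀ t, ‖F t‖ ≤ C₁ * ‖t‖ ^ β) :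
    Integrable (fun t => ‖F t‖ ^ 2 * rhoWeight p α t) := by
  have hmeas : AEStronglyMeasurable (fun t => ‖F t‖ ^ 2 * rhoWeight p α t) :=
    (hF.norm.pow 2).mul ((measurable_norm.pow_const _).const_mul _).aestronglyMeasurable
  have hnorm (t) : ‖‖F t‖ ^ 2 * rhoWeight p α t‖ = ‖F t‖ ^ 2 * rhoWeight p α t :=
    Real.norm_of_nonneg (mul_nonneg (by positivity) (rhoWeight_nonneg hα hα2 t))
  have hdim : (Module.finrank ℝ (EuclideanSpace ℝ (Fin p)) : ℝ) = p := by simp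
  rw [← integrableOn_univ, ← Set.union_compl_self (ball 0 1)]
  refine IntegrableOn.union ?_ ?_
  · refine integrableOn_ball_of_norm_le_rpow (C := C₁ ^ 2 * (cConst p α)⁻¹) (α := α + p - 2 * β)
      (by simpa using Nat.one_le_iff_ne_zero.mpr hp)
      (by rw [hdim]; linarith) (ae_of_all _ fun t => ?_) hmeas
    rw [hnorm]
    exact norm_sq_mul_rhoWeight_le hα hα2 (hHolder t)
  · refine integrableOn_compl_ball_of_norm_le_rpow (C := C₀ ^ 2 * (cConst p α)⁻¹)
      (r := α + p) (by rw [hdim]; linarith) (fun t _ => ?_) hmeas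
    rw [hnorm]
    simpa using norm_sq_mul_rhoWeight_le (β := 0) hα hα2 (by simpa using hbdd t)

theorem integral_norm_sq_mul_rhoWeight_eq_zero_iff (hα : 0 < α) (hα2 : α < 2)
    {F : EuclideanSpace ℝ (Fin p) → ℂ} (hF : Continuous F) {β C₀ C₁ : ℝ} (hαβ : α < 2 * β)
    (hbdd : ∀ t, ‖F t‖ ≤ C₀) (hHolder : ∀ t, ‖F t‖ ≤ C₁ * ‖t‖ ^ β) :
    ∫ t, ‖F t‖ ^ 2 * rhoWeight p α t = 0 ↔ ∀ t, F t = 0 := by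
  have hF0 : F 0 = 0 := by
    simpa [Real.zero_rpow (show β ≠ 0 by linarith)] using hHolder 0
  refine ⟨fun h => ?_, fun h => by simp [h]⟩
  rcases eq_or_ne p 0 with rfl | hp
  · intro t
    rwa [Subsingleton.elim t 0]
  have hae := (integral_eq_zero_iff_of_nonneg
    (fun t => mul_nonneg (by positivity) (rhoWeight_nonneg hα hα2 t))
    (integrable_norm_sq_mul_rhoWeight hp hα hα2 hF.aestronglyMeasurable hαβ hbdd hHolder)).mp h
  have hF_ae : F =ᵐ[volume] 0 := by
    filter_upwards [hae] with t ht
    rcases eq_or_ne t 0 with rfl | ht0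
    · exact hF0
    · simpa [(rhoWeight_pos hα hα2 ht0).ne'] using ht
  exact congrFun ((hF.ae_eq_iff_eq volume continuous_const).mp hF_ae)

end Weight

theorem stmt6 {Ω : Type*} [MeasureSpace Ω] [IsProbabilityMeasure (ℙ : Measure Ω)]
    {p : ℕ} (X Y : Ω → EuclideanSpace ℝ (Fin p))
    (hX : Measurable X) (hY : Measurable Y)
    {α : ℝ} (hα : 0 < α) (hα2 : α < 2)
    (hmomX : Integrable (fun ω => ‖X ω‖ ^ α) (ℙ : Measure Ω))
    (hmomY : Integrable (fun ω => ‖Y ω‖ ^ α) (ℙ : Measure Ω)) :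
    (∫ t : EuclideanSpace ℝ (Fin p),
        ((‖·‖)
            ((∫ ω, Complex.exp (Complex.I *
                (((inner ℝ t (X ω) : ℝ) + (inner ℝ t (Y ω) : ℝ) : ℝ) : ℂ))) -
              (∫ ω, Complex.exp (Complex.I * ((inner ℝ t (X ω) : ℝ) : ℂ))) *
                (∫ ω, Complex.exp (Complex.I * ((inner ℝ t (Y ω) : ℝ) : ℂ))))) ^ 2 *
          rhoWeight p α t) = 0 ↔
      ∀ t : EuclideanSpace ℝ (Fin p),
        (∫ ω, Complex.exp (Complex.I *
            (((inner ℝ t (X ω) : ℝ) + (inner ℝ t (Y ω) : ℝ) : ℝ) : ℂ))) =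
          (∫ ω, Complex.exp (Complex.I * ((inner ℝ t (X ω) : ℝ) : ℂ))) *
            (∫ ω, Complex.exp (Complex.I * ((inner ℝ t (Y ω) : ℝ) : ℂ))) := by
  obtain ⟨β, hβ0, hβ1, hβα, hαβ⟩ : ∃ β, 0 < β ∧ β ≤ 1 ∧ β ≤ α ∧ α < 2 * β :=
    ⟨min 1 α, lt_min one_pos hα, min_le_left _ _, min_le_right _ _, by
      rcases le_total 1 α with h | h <;> simp [h] <;> linarith⟩
  obtain ⟨C, hC⟩ := exists_norm_subIndepDefect_le_rpow hX.aemeasurable hY.aemeasurable hβ0.le hβ1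
    (integrable_norm_rpow_of_le hX.aestronglyMeasurable hβ0.le hα.le hβα hmomX)
    (integrable_norm_rpow_of_le hY.aestronglyMeasurable hβ0.le hα.le hβα hmomY)
  have hdefect (t : EuclideanSpace ℝ (Fin p)) : subIndepDefect ℙ X Y t =
      (∫ ω, exp (I * ↑(⟪t, X ω⟫ + ⟪t, Y ω⟫))) -
        (∫ ω, exp (I * ⟪t, X ω⟫)) * ∫ ω, exp (I * ⟪t, Y ω⟫) := by
    simp only [subIndepDefect, ← integral_exp_I_mul_inner_eq_charFun_map hX.aemeasurable,
      ← integral_exp_I_mul_inner_eq_charFun_map hY.aemeasurable,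
      ← integral_exp_I_mul_inner_eq_charFun_map (hX.add hY).aemeasurable, Pi.add_apply,
      inner_add_right]
  simpa only [hdefect, sub_eq_zero] using
    integral_norm_sq_mul_rhoWeight_eq_zero_iff hα hα2 continuous_subIndepDefect hαβ
      (norm_subIndepDefect_le_two hX.aemeasurable hY.aemeasurable) hC
end

section
/- For all constant vectors a₁, a₂ ∈ ℝ^p, scalar b ∈ ℝ, and p×p orthogonal matrix C, siCov^(α)(a₁ + bCX, a₂ + bCY) = |b|^α · siCov^(α)(X,Y). -/
/-!
The translations only multiply the characteristic-function defect
`φ_{X,Y}(t,t) - φ_X(t) φ_Y(t)` by a unimodular factor, and the linear map `x ↦ b • C x` turns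
it into the defect of `(X, Y)` evaluated at `b • C⁻¹ t`. The weight `ρ_α` depends only on `‖t‖`,
so the isometry `C` is absorbed by a measure-preserving change of variables, while the
substitution `s = b • t` costs the Jacobian `|b|⁻ᵖ` and rescales `‖t‖^(-α-p)` by `|b|^(α+p)`.
-/

open MeasureTheory ProbabilityTheory Real

/-- The α-sub-independent covariance of two ℝ^p-valued random vectors. -/
noncomputable def siCov {Ω : Type*} [MeasureSpace Ω] {p : ℕ} (α : ℝ)
    (X Y : Ω → EuclideanSpace ℝ (Fin p)) : ℝ :=
  ∫ t : EuclideanSpace ℝ (Fin p),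
    (‖
        ((∫ ω, Complex.exp (Complex.I *
            (((inner ℝ t (X ω) : ℝ) + (inner ℝ t (Y ω) : ℝ) : ℝ) : ℂ))) -
          (∫ ω, Complex.exp (Complex.I * ((inner ℝ t (X ω) : ℝ) : ℂ))) *
            (∫ ω, Complex.exp (Complex.I * ((inner ℝ t (Y ω) : ℝ) : ℂ))))‖) ^ 2 *
      rhoWeight p α t

section CharDiff

variable {Ω E : Type*} [MeasurableSpace Ω] [NormedAddCommGroup E] [InnerProductSpace ℝ E]

/-- `φ_{X,Y}(t,t) - φ_X(t) φ_Y(t)` under the measure `μ`. -/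
noncomputable def charDiff (μ : Measure Ω) (X Y : Ω → E) (t : E) : ℂ :=
  (∫ ω, Complex.exp (Complex.I * (((inner ℝ t (X ω) : ℝ) + (inner ℝ t (Y ω) : ℝ) : ℝ) : ℂ)) ∂μ) -
    (∫ ω, Complex.exp (Complex.I * ((inner ℝ t (X ω) : ℝ) : ℂ)) ∂μ) *
      (∫ ω, Complex.exp (Complex.I * ((inner ℝ t (Y ω) : ℝ) : ℂ)) ∂μ)

theorem charDiff_zero (μ : Measure Ω) [IsProbabilityMeasure μ] (X Y : Ω → E) :
    charDiff μ X Y 0 = 0 := by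
  simp [charDiff]

theorem charDiff_add_const (μ : Measure Ω) (X Y : Ω → E) (a₁ a₂ t : E) :
    charDiff μ (fun ω => a₁ + X ω) (fun ω => a₂ + Y ω) t =
      Complex.exp (Complex.I * ((inner ℝ t a₁ : ℝ) : ℂ)) *
        Complex.exp (Complex.I * ((inner ℝ t a₂ : ℝ) : ℂ)) * charDiff μ X Y t := by
  simp only [charDiff, inner_add_right, Complex.ofReal_add, mul_add, Complex.exp_add]
  set c₂ := Complex.exp (Complex.I * ((inner ℝ t a₂ : ℝ) : ℂ))
  simp only [mul_assoc, mul_left_comm _ c₂, integral_const_mul]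
  ring

theorem norm_charDiff_add_const (μ : Measure Ω) (X Y : Ω → E) (a₁ a₂ t : E) :
    ‖charDiff μ (fun ω => a₁ + X ω) (fun ω => a₂ + Y ω) t‖ = ‖charDiff μ X Y t‖ := by
  rw [charDiff_add_const, norm_mul, norm_mul, mul_comm Complex.I, mul_comm Complex.I,
    Complex.norm_exp_ofReal_mul_I, Complex.norm_exp_ofReal_mul_I, one_mul, one_mul]

theorem charDiff_comp_of_inner_eq (μ : Measure Ω) (X Y : Ω → E) {f : E → E} {t s : E}
    (h : ∀ x, inner ℝ t (f x) = inner ℝ s x) :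
    charDiff μ (fun ω => f (X ω)) (fun ω => f (Y ω)) t = charDiff μ X Y s := by
  simp only [charDiff, h]

theorem charDiff_smul (μ : Measure Ω) (X Y : Ω → E) (b : ℝ) (t : E) :
    charDiff μ (fun ω => b • X ω) (fun ω => b • Y ω) t = charDiff μ X Y (b • t) :=
  charDiff_comp_of_inner_eq μ X Y fun x => by
    rw [real_inner_smul_right, real_inner_smul_left]

theorem charDiff_linearIsometryEquiv (μ : Measure Ω) (X Y : Ω → E) (C : E ≃ₗᵢ[ℝ] E) (t : E) :
    charDiff μ (fun ω => C (X ω)) (fun ω => C (Y ω)) t = charDiff μ X Y (C.symm t) :=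
  charDiff_comp_of_inner_eq μ X Y fun x => by
    rw [real_inner_comm, C.inner_map_eq_flip, real_inner_comm]

end CharDiff

theorem rhoWeight_smul (p : ℕ) (α b : ℝ) (t : EuclideanSpace ℝ (Fin p)) :
    rhoWeight p α (b • t) = |b| ^ (-α - p) * rhoWeight p α t := by
  rw [rhoWeight, rhoWeight, norm_smul, Real.norm_eq_abs,
    Real.mul_rpow (abs_nonneg b) (norm_nonneg t)]
  ring

section SiCov

variable {Ω : Type*} [MeasureSpace Ω] {p : ℕ} (α : ℝ) (X Y : Ω → EuclideanSpace ℝ (Fin p))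

theorem siCov_eq_integral_charDiff :
    siCov α X Y = ∫ t, ‖charDiff ℙ X Y t‖ ^ 2 * rhoWeight p α t := rfl

theorem siCov_add_const (a₁ a₂ : EuclideanSpace ℝ (Fin p)) :
    siCov α (fun ω => a₁ + X ω) (fun ω => a₂ + Y ω) = siCov α X Y := by
  simp only [siCov_eq_integral_charDiff, norm_charDiff_add_const]

theorem siCov_linearIsometryEquiv (C : EuclideanSpace ℝ (Fin p) ≃ₗᵢ[ℝ] EuclideanSpace ℝ (Fin p)) :
    siCov α (fun ω => C (X ω)) (fun ω => C (Y ω)) = siCov α X Y := by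
  have hρ : ∀ t, rhoWeight p α t = rhoWeight p α (C.symm t) := fun t => by
    rw [rhoWeight, rhoWeight, C.symm.norm_map]
  simp only [siCov_eq_integral_charDiff, charDiff_linearIsometryEquiv]
  rw [integral_congr_ae (Filter.Eventually.of_forall fun t => by rw [hρ t])]
  exact integral_comp C.symm fun s => ‖charDiff ℙ X Y s‖ ^ 2 * rhoWeight p α s

theorem siCov_smul_of_ne_zero {b : ℝ} (hb : b ≠ 0) :
    siCov α (fun ω => b • X ω) (fun ω => b • Y ω) = |b| ^ α * siCov α X Y := by
  have hb' : 0 < |b| := abs_pos.mpr hb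
  set g : EuclideanSpace ℝ (Fin p) → ℝ := fun s => ‖charDiff ℙ X Y s‖ ^ 2 * rhoWeight p α s
  have hρ : ∀ t, rhoWeight p α t = |b| ^ (α + p) * rhoWeight p α (b • t) := fun t => by
    rw [rhoWeight_smul, ← mul_assoc, ← Real.rpow_add hb', show α + p + (-α - p) = (0 : ℝ) by ring,
      Real.rpow_zero, one_mul]
  calc siCov α (fun ω => b • X ω) (fun ω => b • Y ω)
      = ∫ t, |b| ^ (α + p) * g (b • t) := by
        simp only [siCov_eq_integral_charDiff, charDiff_smul, g]
        congr 1; funext t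
        rw [hρ t]; ring
    _ = |b| ^ (α + p) * |b| ^ (-(p : ℝ)) * ∫ s, g s := by
        rw [integral_const_mul, Measure.integral_comp_smul, finrank_euclideanSpace_fin,
          smul_eq_mul, abs_inv, abs_pow, ← Real.rpow_natCast, Real.rpow_neg hb'.le, mul_assoc]
    _ = |b| ^ α * siCov α X Y := by
        rw [← Real.rpow_add hb', add_neg_cancel_right]; rfl

theorem siCov_smul [IsProbabilityMeasure (ℙ : Measure Ω)] (hα : 0 < α) (b : ℝ) :
    siCov α (fun ω => b • X ω) (fun ω => b • Y ω) = |b| ^ α * siCov α X Y := by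
  rcases eq_or_ne b 0 with rfl | hb
  · rw [siCov_eq_integral_charDiff, abs_zero, Real.zero_rpow hα.ne', zero_mul]
    refine integral_eq_zero_of_ae (Filter.Eventually.of_forall fun t => ?_)
    dsimp only [Pi.zero_apply]
    rw [charDiff_smul, zero_smul, charDiff_zero, norm_zero]
    ring
  · exact siCov_smul_of_ne_zero α X Y hb

end SiCov

theorem stmt8_general {Ω : Type*} [MeasureSpace Ω] [IsProbabilityMeasure (ℙ : Measure Ω)]
    {p : ℕ} (X Y : Ω → EuclideanSpace ℝ (Fin p))
    {α : ℝ} (hα : 0 < α)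
    (a₁ a₂ : EuclideanSpace ℝ (Fin p)) (b : ℝ)
    (C : EuclideanSpace ℝ (Fin p) ≃ₗᵢ[ℝ] EuclideanSpace ℝ (Fin p)) :
    siCov α (fun ω => a₁ + b • C (X ω)) (fun ω => a₂ + b • C (Y ω)) =
      |b| ^ α * siCov α X Y := by
  rw [siCov_add_const α (fun ω => b • C (X ω)) (fun ω => b • C (Y ω)),
    siCov_smul α _ _ hα, siCov_linearIsometryEquiv]

theorem stmt8 {Ω : Type*} [MeasureSpace Ω] [IsProbabilityMeasure (ℙ : Measure Ω)]
    {p : ℕ} (X Y : Ω → EuclideanSpace ℝ (Fin p))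
    (hX : Measurable X) (hY : Measurable Y)
    {α : ℝ} (hα : 0 < α) (hα2 : α < 2)
    (hmomX : Integrable (fun ω => ‖X ω‖ ^ α) (ℙ : Measure Ω))
    (hmomY : Integrable (fun ω => ‖Y ω‖ ^ α) (ℙ : Measure Ω))
    (a₁ a₂ : EuclideanSpace ℝ (Fin p)) (b : ℝ)
    (C : EuclideanSpace ℝ (Fin p) ≃ₗᵢ[ℝ] EuclideanSpace ℝ (Fin p)) :
    siCov α (fun ω => a₁ + b • C (X ω)) (fun ω => a₂ + b • C (Y ω)) =
      |b| ^ α * siCov α X Y :=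
  stmt8_general X Y hα a₁ a₂ b C
end

section
/- For bivariate standard normal (X,Y) with correlation ρ, the sub-independent correlation siCor(X,Y) (with α=1) equals (√(4+2ρ) − √(1+ρ) − 1)/(√2 − 1), and this quantity satisfies siCor(X,Y) ≤ |ρ|; moreover it equals 0 at ρ = 0 and 1 at ρ = −1. -/
open MeasureTheory ProbabilityTheory Real

/-!
Each integrand is `|Z|` with `Z = ∑ᵢ (aᵢ Xᵢ + bᵢ Yᵢ)` for independent copies `(Xᵢ, Yᵢ)` of
`(X, Y)`, so `Z` is centred Gaussian of variance `σ² = ∑ᵢ (aᵢ² + bᵢ² + 2 aᵢ bᵢ ρ)` and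
`E|Z| = σ √(2/π)`. Hence `siCov = 2 (√(4 + 2ρ) - √(1 + ρ) - 1) √(2/π)`, and the normaliser,
written as `E|X₁ - X₂| + E|Y₃ - Y₄| - E|X₁ - X₂ + Y₃ - Y₄|`, is `2 (√2 - 1) √(2/π)`.
For the bound put `s = √(1 + ρ)`, `a = √(4 + 2ρ)`: then `(a - s - 1)(a + s + 1) = (s - 1)²`,
`(√2 - 1)(a + s + 1) ≥ (√2 - 1)(√2 + 1) = 1` and `(s - 1)² ≤ |s - 1| (s + 1) = |ρ|`.
-/

open scoped NNReal

lemma integral_Ioi_mul_exp_neg_mul_sq {b : ℝ} (hb : 0 < b) :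
    ∫ x in Set.Ioi (0 : ℝ), x * exp (-b * x ^ 2) = (2 * b)⁻¹ := by
  have h := integral_rpow_mul_exp_neg_mul_rpow two_pos (by norm_num : (-1 : ℝ) < 1) hb
  norm_num [rpow_neg_one] at h
  simp only [neg_mul, h]
  ring

lemma integral_abs_mul_exp_neg_mul_sq {b : ℝ} (hb : 0 < b) :
    ∫ x, |x| * exp (-b * x ^ 2) = b⁻¹ := by
  have h := integral_comp_abs (f := fun x => x * exp (-b * x ^ 2))
  simp only [sq_abs] at h
  rw [h, integral_Ioi_mul_exp_neg_mul_sq hb]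
  field_simp

lemma integral_abs_gaussianReal (v : ℝ≥0) :
    ∫ x, |x| ∂gaussianReal 0 v = √v * √(2 / π) := by
  rcases eq_or_ne v 0 with rfl | hv
  · simp [gaussianReal_zero_var]
  have hv' : (0 : ℝ) < v := by positivity
  have hdensity : ∀ x, gaussianPDFReal 0 v x • |x| =
      (√(2 * π * v))⁻¹ * (|x| * exp (-(2 * (v : ℝ))⁻¹ * x ^ 2)) := fun x => by
    rw [gaussianPDFReal, smul_eq_mul]
    ring_nf
  rw [integral_gaussianReal_eq_integral_smul hv]
  simp_rw [hdensity]
  rw [integral_const_mul, integral_abs_mul_exp_neg_mul_sq (by positivity), inv_inv,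
    ← sqrt_mul v.coe_nonneg, show (v : ℝ) * (2 / π) = (2 * v) ^ 2 / (2 * π * v) by field_simp,
    sqrt_div' _ (by positivity), sqrt_sq (by positivity), inv_mul_eq_div]

/-- `Z ~ N₂(0, 0, 1, 1, ρ)`, stated through the laws of all linear combinations (Cramér–Wold). -/
def HasStdBivariateGaussianLaw {Ω : Type*} [MeasurableSpace Ω] (Z : Ω → ℝ × ℝ) (ρ : ℝ)
    (μ : Measure Ω) : Prop :=
  ∀ a b : ℝ, μ.map (fun ω => a * (Z ω).1 + b * (Z ω).2) =
    gaussianReal 0 (a ^ 2 + b ^ 2 + 2 * a * b * ρ).toNNReal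

section IndependentSums

variable {Ω ι : Type*} {mΩ : MeasurableSpace Ω} {μ : Measure Ω} [IsProbabilityMeasure μ]

lemma gaussianReal_map_sum_of_iIndepFun {Q : ι → Ω → ℝ} (hQ : ∀ i, AEMeasurable (Q i) μ)
    (hind : iIndepFun Q μ) {m : ι → ℝ} {v : ι → ℝ≥0}
    (hlaw : ∀ i, μ.map (Q i) = gaussianReal (m i) (v i)) (s : Finset ι) :
    μ.map (∑ i ∈ s, Q i) = gaussianReal (∑ i ∈ s, m i) (∑ i ∈ s, v i) := by
  classical
  induction s using Finset.cons_induction with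
  | empty => simp [gaussianReal_zero_var, Pi.zero_def]
  | cons j s hj ih =>
    rw [Finset.sum_cons, Finset.sum_cons, Finset.sum_cons, add_comm (Q j), add_comm (m j),
      add_comm (v j)]
    exact gaussianReal_add_gaussianReal_of_indepFun
      (hind.indepFun_finsetSum_of_notMem₀ hQ hj) ih (hlaw j)

lemma integral_abs_sum_of_iIndepFun_gaussianReal [Fintype ι] {Q : ι → Ω → ℝ}
    (hind : iIndepFun Q μ) {v : ι → ℝ≥0} (hlaw : ∀ i, μ.map (Q i) = gaussianReal 0 (v i)) :
    ∫ ω, |∑ i, Q i ω| ∂μ = √(∑ i, (v i : ℝ)) * √(2 / π) := by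
  have hQ : ∀ i, AEMeasurable (Q i) μ := fun i =>
    AEMeasurable.of_map_ne_zero (by simp [hlaw i, IsProbabilityMeasure.ne_zero])
  have hsum := gaussianReal_map_sum_of_iIndepFun hQ hind hlaw Finset.univ
  rw [Finset.sum_const_zero] at hsum
  rw [← NNReal.coe_sum, ← integral_abs_gaussianReal, ← hsum,
    integral_map (Finset.aemeasurable_sum _ fun i _ => hQ i) continuous_abs.aestronglyMeasurable]
  simp only [Finset.sum_apply]

lemma integral_abs_sum_of_iIndepFun_bivariate [Fintype ι] {P : ι → Ω → ℝ × ℝ} {ρ : ℝ}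
    (hρ : |ρ| ≤ 1) (hind : iIndepFun P μ)
    (hlaw : ∀ i, HasStdBivariateGaussianLaw (P i) ρ μ)
    (a b : ι → ℝ) :
    ∫ ω, |∑ i, (a i * (P i ω).1 + b i * (P i ω).2)| ∂μ =
      √(∑ i, (a i ^ 2 + b i ^ 2 + 2 * a i * b i * ρ)) * √(2 / π) := by
  have hvar : ∀ i, 0 ≤ a i ^ 2 + b i ^ 2 + 2 * a i * b i * ρ := fun i => by
    have := abs_le.mp hρ
    nlinarith [sq_nonneg (a i + b i), sq_nonneg (a i - b i)]
  have := integral_abs_sum_of_iIndepFun_gaussianReal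
    (hind.comp (fun i (p : ℝ × ℝ) => a i * p.1 + b i * p.2) fun i => by fun_prop) (hlaw · _ _)
  simpa only [Function.comp_apply, Real.coe_toNNReal _ (hvar _)] using this

end IndependentSums

section FourCopies

variable {Ω : Type*} {mΩ : MeasurableSpace Ω} {μ : Measure Ω} [IsProbabilityMeasure μ]
  {P : Fin 4 → Ω → ℝ × ℝ} {ρ : ℝ}

lemma siCov_eq (hρ : |ρ| ≤ 1) (hind : iIndepFun P μ)
    (hlaw : ∀ i, HasStdBivariateGaussianLaw (P i) ρ μ) :
    2 * (∫ ω, |(P 0 ω).1 + (P 0 ω).2 - (P 1 ω).1 - (P 2 ω).2| ∂μ) -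
        (∫ ω, |(P 0 ω).1 + (P 1 ω).2 - (P 2 ω).1 - (P 3 ω).2| ∂μ) -
        (∫ ω, |(P 0 ω).1 + (P 0 ω).2 - (P 1 ω).1 - (P 1 ω).2| ∂μ) =
      2 * (√(4 + 2 * ρ) - √(1 + ρ) - 1) * √(2 / π) := by
  have key := integral_abs_sum_of_iIndepFun_bivariate hρ hind hlaw
  have h₁ : ∫ ω, |(P 0 ω).1 + (P 0 ω).2 - (P 1 ω).1 - (P 2 ω).2| ∂μ =
      √(4 + 2 * ρ) * √(2 / π) := by
    convert key ![1, -1, 0, 0] ![1, 0, -1, 0] using 4 <;> simp [Fin.sum_univ_four] <;> ring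
  have h₂ : ∫ ω, |(P 0 ω).1 + (P 1 ω).2 - (P 2 ω).1 - (P 3 ω).2| ∂μ = √4 * √(2 / π) := by
    convert key ![1, 0, -1, 0] ![0, 1, 0, -1] using 4 <;> simp [Fin.sum_univ_four] <;> ring
  have h₃ : ∫ ω, |(P 0 ω).1 + (P 0 ω).2 - (P 1 ω).1 - (P 1 ω).2| ∂μ =
      √(4 * (1 + ρ)) * √(2 / π) := by
    convert key ![1, -1, 0, 0] ![1, -1, 0, 0] using 4 <;> simp [Fin.sum_univ_four] <;> ring
  rw [h₁, h₂, h₃, sqrt_mul zero_le_four, show √4 = 2 by norm_num]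
  ring

lemma siCov_normalizer_eq (hρ : |ρ| ≤ 1) (hind : iIndepFun P μ)
    (hlaw : ∀ i, HasStdBivariateGaussianLaw (P i) ρ μ) :
    (∫ ω, |(P 0 ω).1 - (P 1 ω).1| ∂μ) + (∫ ω, |(P 2 ω).2 - (P 3 ω).2| ∂μ) -
        (∫ ω, |(P 0 ω).1 - (P 1 ω).1 + (P 2 ω).2 - (P 3 ω).2| ∂μ) =
      2 * (√2 - 1) * √(2 / π) := by
  have key := integral_abs_sum_of_iIndepFun_bivariate hρ hind hlaw
  have h₁ : ∫ ω, |(P 0 ω).1 - (P 1 ω).1| ∂μ = √2 * √(2 / π) := by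
    convert key ![1, -1, 0, 0] ![0, 0, 0, 0] using 4 <;> simp [Fin.sum_univ_four] <;> ring
  have h₂ : ∫ ω, |(P 2 ω).2 - (P 3 ω).2| ∂μ = √2 * √(2 / π) := by
    convert key ![0, 0, 0, 0] ![0, 0, 1, -1] using 4 <;> simp [Fin.sum_univ_four] <;> ring
  have h₃ : ∫ ω, |(P 0 ω).1 - (P 1 ω).1 + (P 2 ω).2 - (P 3 ω).2| ∂μ = √4 * √(2 / π) := by
    convert key ![1, -1, 0, 0] ![0, 0, 1, -1] using 4 <;> simp [Fin.sum_univ_four] <;> ring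
  rw [h₁, h₂, h₃, show √4 = 2 by norm_num]
  ring

end FourCopies

noncomputable def siCorGaussian (ρ : ℝ) : ℝ := (√(4 + 2 * ρ) - √(1 + ρ) - 1) / (√2 - 1)

lemma siCorGaussian_le_abs {ρ : ℝ} (hρ : -1 ≤ ρ) : siCorGaussian ρ ≤ |ρ| := by
  set s := √(1 + ρ)
  set a := √(4 + 2 * ρ)
  have hs : s ^ 2 = 1 + ρ := sq_sqrt (by linarith)
  have ha : a ^ 2 = 4 + 2 * ρ := sq_sqrt (by linarith)
  have hs0 : 0 ≤ s := sqrt_nonneg _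
  have ha2 : √2 ≤ a := sqrt_le_sqrt (by linarith)
  have hconj : (a - s - 1) * (a + s + 1) = (s - 1) ^ 2 := by linear_combination ha - 2 * hs
  have hscale : 1 ≤ (√2 - 1) * (a + s + 1) := by
    nlinarith [one_lt_sqrt_two, sq_sqrt zero_le_two]
  have habs : |ρ| = |s - 1| * (s + 1) := by
    rw [show ρ = (s - 1) * (s + 1) by linear_combination -hs, abs_mul,
      abs_of_nonneg (by linarith : 0 ≤ s + 1)]
  have hs1 : |s - 1| ≤ s + 1 := abs_sub_le_iff.mpr ⟨by linarith, by linarith⟩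
  rw [siCorGaussian, div_le_iff₀ (sub_pos.mpr one_lt_sqrt_two)]
  refine le_of_mul_le_mul_right ?_ (by linarith [sqrt_nonneg 2] : 0 < a + s + 1)
  calc (a - s - 1) * (a + s + 1) = |s - 1| * |s - 1| := by rw [hconj, abs_mul_abs_self, sq]
    _ ≤ |ρ| := by rw [habs]; exact mul_le_mul_of_nonneg_left hs1 (abs_nonneg _)
    _ ≤ |ρ| * ((√2 - 1) * (a + s + 1)) := le_mul_of_one_le_right (abs_nonneg _) hscale
    _ = |ρ| * (√2 - 1) * (a + s + 1) := by ring

lemma siCorGaussian_zero : siCorGaussian 0 = 0 := by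
  norm_num [siCorGaussian]

lemma siCorGaussian_neg_one : siCorGaussian (-1) = 1 := by
  norm_num [siCorGaussian, sub_ne_zero.mpr one_lt_sqrt_two.ne']

theorem stmt15_general {Ω : Type*} [MeasureSpace Ω] [IsProbabilityMeasure (ℙ : Measure Ω)]
    (X Y : Ω → ℝ)
    (ρ : ℝ) (hρ : ρ ∈ Set.Icc (-1 : ℝ) 1)
    (hgauss : ∀ a b : ℝ,
      Measure.map (fun ω => a * X ω + b * Y ω) (ℙ : Measure Ω) =
        gaussianReal 0 (a ^ 2 + b ^ 2 + 2 * a * b * ρ).toNNReal)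
    (P : Fin 4 → Ω → ℝ × ℝ)
    (hindep : iIndepFun P ℙ)
    (hid : ∀ i, IdentDistrib (P i) (fun ω => (X ω, Y ω)) ℙ ℙ) :
    ∀ num den : ℝ,
      num = 2 * (∫ ω, |(P 0 ω).1 + (P 0 ω).2 - (P 1 ω).1 - (P 2 ω).2|) -
          (∫ ω, |(P 0 ω).1 + (P 1 ω).2 - (P 2 ω).1 - (P 3 ω).2|) -
          (∫ ω, |(P 0 ω).1 + (P 0 ω).2 - (P 1 ω).1 - (P 1 ω).2|) →
      den = (∫ ω, |(P 0 ω).1 - (P 1 ω).1|) + (∫ ω, |(P 2 ω).2 - (P 3 ω).2|) -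
          (∫ ω, |(P 0 ω).1 - (P 1 ω).1 + (P 2 ω).2 - (P 3 ω).2|) →
      (num / den =
          (Real.sqrt (4 + 2 * ρ) - Real.sqrt (1 + ρ) - 1) / (Real.sqrt 2 - 1) ∧
        num / den ≤ |ρ| ∧
        (ρ = 0 → num / den = 0) ∧
        (ρ = -1 → num / den = 1)) := by
  intro num den hnum hden
  have hρ' : |ρ| ≤ 1 := abs_le.mpr hρ
  have hlaw : ∀ i, HasStdBivariateGaussianLaw (P i) ρ ℙ := fun i a b =>
    ((hid i).comp (by fun_prop : Measurable fun p : ℝ × ℝ => a * p.1 + b * p.2)).map_eq.trans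
      (hgauss a b)
  have hquot : num / den = siCorGaussian ρ := by
    rw [hnum, hden, siCov_eq hρ' hindep hlaw, siCov_normalizer_eq hρ' hindep hlaw,
      mul_div_mul_right _ _ (by positivity), mul_div_mul_left _ _ two_ne_zero, siCorGaussian]
  refine ⟨hquot, hquot ▸ siCorGaussian_le_abs hρ.1, fun h => ?_, fun h => ?_⟩
  · rw [hquot, h, siCorGaussian_zero]
  · rw [hquot, h, siCorGaussian_neg_one]

theorem stmt15 {Ω : Type*} [MeasureSpace Ω] [IsProbabilityMeasure (ℙ : Measure Ω)]
    (X Y : Ω → ℝ) (hX : Measurable X) (hY : Measurable Y)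
    (ρ : ℝ) (hρ : ρ ∈ Set.Icc (-1 : ℝ) 1)
    (hgauss : ∀ a b : ℝ,
      Measure.map (fun ω => a * X ω + b * Y ω) (ℙ : Measure Ω) =
        gaussianReal 0 (a ^ 2 + b ^ 2 + 2 * a * b * ρ).toNNReal)
    (P : Fin 4 → Ω → ℝ × ℝ)
    (hmeas : ∀ i, Measurable (P i))
    (hindep : iIndepFun P ℙ)
    (hid : ∀ i, IdentDistrib (P i) (fun ω => (X ω, Y ω)) ℙ ℙ) :
    ∀ num den : ℝ,
      num = 2 * (∫ ω, |(P 0 ω).1 + (P 0 ω).2 - (P 1 ω).1 - (P 2 ω).2|) -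
          (∫ ω, |(P 0 ω).1 + (P 1 ω).2 - (P 2 ω).1 - (P 3 ω).2|) -
          (∫ ω, |(P 0 ω).1 + (P 0 ω).2 - (P 1 ω).1 - (P 1 ω).2|) →
      den = (∫ ω, |(P 0 ω).1 - (P 1 ω).1|) + (∫ ω, |(P 2 ω).2 - (P 3 ω).2|) -
          (∫ ω, |(P 0 ω).1 - (P 1 ω).1 + (P 2 ω).2 - (P 3 ω).2|) →
      (num / den =
          (Real.sqrt (4 + 2 * ρ) - Real.sqrt (1 + ρ) - 1) / (Real.sqrt 2 - 1) ∧
        num / den ≤ |ρ| ∧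
        (ρ = 0 → num / den = 0) ∧
        (ρ = -1 → num / den = 1)) :=
  stmt15_general X Y ρ hρ hgauss P hindep hid
end

section
/- (Hoeffding's inequality under sub-independence) Let X₁,...,Xₙ be real random variables with Xᵢ ∈ [aᵢ, bᵢ] almost surely, such that for every t ∈ ℝ, E[e^{t(X₁+⋯+Xₙ)}] = ∏ᵢ E[e^{tXᵢ}] (sub-independence at the level of moment generating functions). Then for Sₙ = X₁+⋯+Xₙ and any ε > 0, P(Sₙ − E[Sₙ] ≥ ε) ≤ exp(−2ε²/∑ᵢ(bᵢ−aᵢ)²) and P(Sₙ − E[Sₙ] ≤ −ε) ≤ exp(−2ε²/∑ᵢ(bᵢ−aᵢ)²). -/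
/-!
By Hoeffding's lemma each centred variable `Xᵢ - E Xᵢ` is sub-Gaussian with variance proxy
`((bᵢ - aᵢ) / 2)²`. Centring multiplies each MGF by `exp (-t E Xᵢ)`, so the product identity for
the MGFs survives centring, and the MGF of `Sₙ - E Sₙ` is bounded by the product of the individual
sub-Gaussian bounds: `Sₙ - E Sₙ` is sub-Gaussian with proxy `∑ (bᵢ - aᵢ)² / 4`. The Chernoff bound
gives the upper tail, and applied to `-(Sₙ - E Sₙ)` the lower one.
-/

open MeasureTheory ProbabilityTheory Real

open scoped NNReal

namespace ProbabilityTheory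

variable {Ω ι : Type*} {mΩ : MeasurableSpace Ω} {μ : Measure Ω} [Fintype ι] {X : ι → Ω → ℝ}

/- The product of the MGFs is positive, and the integral of a non-integrable function is `0`,
so the identity itself forces `exp (t * ∑ i, X i)` to be integrable. -/
lemma integrable_exp_mul_sum_of_mgf_sum_eq_prod [NeZero μ]
    (h_int : ∀ i t, Integrable (fun ω ↦ exp (t * X i ω)) μ)
    (h_mgf : ∀ t, mgf (fun ω ↦ ∑ i, X i ω) μ t = ∏ i, mgf (X i) μ t) (t : ℝ) :
    Integrable (fun ω ↦ exp (t * ∑ i, X i ω)) μ :=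
  mgf_pos_iff.1 (h_mgf t ▸ Finset.prod_pos fun i _ ↦ mgf_pos_iff.2 (h_int i t))

lemma HasSubgaussianMGF.sum_of_mgf_sum_eq_prod [NeZero μ] {c : ι → ℝ≥0}
    (h_subG : ∀ i, HasSubgaussianMGF (X i) (c i) μ)
    (h_mgf : ∀ t, mgf (fun ω ↦ ∑ i, X i ω) μ t = ∏ i, mgf (X i) μ t) :
    HasSubgaussianMGF (fun ω ↦ ∑ i, X i ω) (∑ i, c i) μ where
  integrable_exp_mul :=
    integrable_exp_mul_sum_of_mgf_sum_eq_prod (fun i ↦ (h_subG i).integrable_exp_mul) h_mgf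
  mgf_le t := calc
    mgf (fun ω ↦ ∑ i, X i ω) μ t = ∏ i, mgf (X i) μ t := h_mgf t
    _ ≤ ∏ i, exp (c i * t ^ 2 / 2) :=
      Finset.prod_le_prod (fun _ _ ↦ mgf_nonneg) fun i _ ↦ (h_subG i).mgf_le t
    _ = exp ((∑ i, c i : ℝ≥0) * t ^ 2 / 2) := by
      rw [← exp_sum, NNReal.coe_sum, Finset.sum_mul, Finset.sum_div]

lemma mgf_sum_sub_eq_prod_of_mgf_sum_eq_prod (m : ι → ℝ)
    (h_mgf : ∀ t, mgf (fun ω ↦ ∑ i, X i ω) μ t = ∏ i, mgf (X i) μ t) (t : ℝ) :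
    mgf (fun ω ↦ ∑ i, (X i ω - m i)) μ t = ∏ i, mgf (fun ω ↦ X i ω - m i) μ t := by
  have h_shift : (fun ω ↦ ∑ i, (X i ω - m i)) = fun ω ↦ ∑ i, X i ω + -∑ i, m i := by
    ext ω
    rw [Finset.sum_sub_distrib, sub_eq_add_neg]
  simp_rw [h_shift, sub_eq_add_neg, mgf_add_const, h_mgf, Finset.prod_mul_distrib, ← exp_sum,
    ← Finset.mul_sum, Finset.sum_neg_distrib]

lemma hasSubgaussianMGF_sum_sub_integral_of_mgf_sum_eq_prod [IsProbabilityMeasure μ]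
    {a b : ι → ℝ} (hm : ∀ i, AEMeasurable (X i) μ)
    (hb : ∀ i, ∀ᵐ ω ∂μ, X i ω ∈ Set.Icc (a i) (b i))
    (h_mgf : ∀ t, mgf (fun ω ↦ ∑ i, X i ω) μ t = ∏ i, mgf (X i) μ t) :
    HasSubgaussianMGF (fun ω ↦ ∑ i, X i ω - μ[fun ω ↦ ∑ i, X i ω])
      (∑ i, (‖b i - a i‖₊ / 2) ^ 2) μ := by
  have h_centered : (fun ω ↦ ∑ i, X i ω - μ[fun ω ↦ ∑ i, X i ω]) =
      fun ω ↦ ∑ i, (X i ω - μ[X i]) := by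
    ext ω
    rw [integral_finsetSum _ fun i _ ↦ Integrable.of_mem_Icc _ _ (hm i) (hb i),
      Finset.sum_sub_distrib]
  rw [h_centered]
  exact HasSubgaussianMGF.sum_of_mgf_sum_eq_prod
    (fun i ↦ hasSubgaussianMGF_of_mem_Icc (hm i) (hb i))
    (mgf_sum_sub_eq_prod_of_mgf_sum_eq_prod _ h_mgf)

lemma HasSubgaussianMGF.measure_ge_le_ofReal [IsFiniteMeasure μ] {Y : Ω → ℝ} {c : ℝ≥0}
    (h : HasSubgaussianMGF Y c μ) {ε : ℝ} (hε : 0 ≤ ε) :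
    μ {ω | ε ≤ Y ω} ≤ ENNReal.ofReal (exp (-ε ^ 2 / (2 * c))) :=
  (ENNReal.le_ofReal_iff_toReal_le (measure_ne_top _ _) (exp_nonneg _)).2 (h.measure_ge_le hε)

end ProbabilityTheory

theorem stmt19 {Ω : Type*} [MeasureSpace Ω] [IsProbabilityMeasure (ℙ : Measure Ω)]
    {n : ℕ} (X : Fin n → Ω → ℝ) (a b : Fin n → ℝ)
    (hmeas : ∀ i, Measurable (X i))
    (hbound : ∀ i, ∀ᵐ ω ∂(ℙ : Measure Ω), X i ω ∈ Set.Icc (a i) (b i))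
    (hsub : ∀ t : ℝ,
      (∫ ω, Real.exp (t * ∑ i, X i ω)) = ∏ i, ∫ ω, Real.exp (t * X i ω))
    (ε : ℝ) (hε : 0 < ε) :
    (ℙ : Measure Ω) {ω | ε ≤ (∑ i, X i ω) - ∫ ω', ∑ i, X i ω'} ≤
        ENNReal.ofReal (Real.exp (-2 * ε ^ 2 / ∑ i, (b i - a i) ^ 2)) ∧
      (ℙ : Measure Ω) {ω | (∑ i, X i ω) - ∫ ω', ∑ i, X i ω' ≤ -ε} ≤
        ENNReal.ofReal (Real.exp (-2 * ε ^ 2 / ∑ i, (b i - a i) ^ 2)) := by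
  have h_subG := hasSubgaussianMGF_sum_sub_integral_of_mgf_sum_eq_prod
    (fun i ↦ (hmeas i).aemeasurable) hbound hsub
  have h_exponent : -ε ^ 2 / (2 * ((∑ i, (‖b i - a i‖₊ / 2) ^ 2 : ℝ≥0) : ℝ)) =
      -2 * ε ^ 2 / ∑ i, (b i - a i) ^ 2 := by
    simp only [NNReal.coe_sum, NNReal.coe_pow, NNReal.coe_div, NNReal.coe_ofNat, coe_nnnorm,
      Real.norm_eq_abs, sq_abs, div_pow, ← Finset.sum_div]
    ring
  rw [← h_exponent]
  refine ⟨h_subG.measure_ge_le_ofReal hε.le, ?_⟩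
  convert h_subG.neg.measure_ge_le_ofReal hε.le using 2
  ext ω
  simp only [Set.mem_ofPred_eq, Pi.neg_apply, le_neg]
end
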